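/- arXiv:1705.04243 — 4 statements merged into one kernel-verified Lean document; each statement's English description precedes it below -/
import Mathlib

section
/- Let f(x,y) be a continuous real-valued function of two real variables such that: (1) f has a partial derivative in x at (x₀,y₀) which vanishes there; (2) f has a locally bounded, continuous second partial derivative in x at all points (x,y); (3) the mixed partial derivative ∂_y∂_x f exists and is nonzero at (x₀,y₀); (4) y ↦ f(x₀,y) is constant. Then there exists r > 0 such that for every y with 0 < |y - y₀| < r there exists x* with f(x*, y) < f(x₀, y₀). -/
/-!
Since `y ↦ ∂ₓf(x₀, y)` has nonzero derivative at `y₀`, it does not vanish at any `y ≠ y₀` close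
to `y₀`. For such `y`, the point `x₀` is not a critical point of `f(·, y)`, so it is not a minimum
of `f(·, y)`, whose value there is `f(x₀, y) = f(x₀, y₀)`.
-/

open Filter Topology

lemma exists_lt_of_hasDerivAt_ne_zero {g : ℝ → ℝ} {d x : ℝ} (h : HasDerivAt g d x)
    (hd : d ≠ 0) : ∃ x', g x' < g x := by
  by_contra! hmin
  exact hd (IsLocalMin.hasDerivAt_eq_zero (Eventually.of_forall hmin) h)

theorem statement0_general (f : ℝ × ℝ → ℝ) (x₀ y₀ : ℝ)
    (fx : ℝ → ℝ → ℝ) (m : ℝ)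
    (hfx : ∀ x y : ℝ, HasDerivAt (fun x' => f (x', y)) (fx x y) x)
    (hmix : HasDerivAt (fun y => fx x₀ y) m y₀)
    (hm : m ≠ 0)
    (hconst : ∀ y : ℝ, f (x₀, y) = f (x₀, y₀)) :
    ∃ r > 0, ∀ y : ℝ, 0 < |y - y₀| → |y - y₀| < r →
      ∃ x : ℝ, f (x, y) < f (x₀, y₀) := by
  obtain ⟨r, hr, hfx_ne⟩ : ∃ r > 0, ∀ ⦃y⦄, dist y y₀ < r → y ≠ y₀ → fx x₀ y ≠ 0 :=
    Metric.eventually_nhds_iff.mp (eventually_nhdsWithin_iff.mp (hmix.eventually_ne hm))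
  refine ⟨r, hr, fun y hy hyr => ?_⟩
  obtain ⟨x, hx⟩ := exists_lt_of_hasDerivAt_ne_zero (hfx x₀ y)
    (hfx_ne hyr (sub_ne_zero.mp (abs_pos.mp hy)))
  exact ⟨x, hconst y ▸ hx⟩

/-- Second-derivative-test variant (Lemma `calculus-lemma`): if `f` is continuous,
has a vanishing partial derivative in `x` at `(x₀, y₀)`, a continuous (hence locally
bounded) second partial derivative in `x` everywhere, a nonzero mixed partial
`∂_y ∂_x f` at `(x₀, y₀)`, and `y ↦ f (x₀, y)` is constant, then there is `r > 0`
such that for every `y` with `0 < |y - y₀| < r` there is `x*` with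
`f (x*, y) < f (x₀, y₀)`. -/
theorem statement0 (f : ℝ × ℝ → ℝ) (x₀ y₀ : ℝ)
    (fx fxx : ℝ → ℝ → ℝ) (m : ℝ)
    (hf : Continuous f)
    (hfx : ∀ x y : ℝ, HasDerivAt (fun x' => f (x', y)) (fx x y) x)
    (hfx0 : fx x₀ y₀ = 0)
    (hfxx : ∀ x y : ℝ, HasDerivAt (fun x' => fx x' y) (fxx x y) x)
    (hfxx_cont : Continuous fun p : ℝ × ℝ => fxx p.1 p.2)
    (hmix : HasDerivAt (fun y => fx x₀ y) m y₀)
    (hm : m ≠ 0)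
    (hconst : ∀ y : ℝ, f (x₀, y) = f (x₀, y₀)) :
    ∃ r > 0, ∀ y : ℝ, 0 < |y - y₀| → |y - y₀| < r →
      ∃ x : ℝ, f (x, y) < f (x₀, y₀) :=
  statement0_general f x₀ y₀ fx m hfx hmix hm hconst
end

section
/- Let ν be a probability measure on a finite set, and A a subset with ε-dilation A_ε. Define ψ to equal ν(A) on A_ε^c, −ν(A^c) on A, and −ν(A^c) + min{d(x,A)/ε, 1} on A_ε∖A. Then Var_ν(ψ) ≥ ν(A)·ν(A_ε^c) − 4·ν(A_ε∖A)². -/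
open scoped Classical

private theorem statement5_aux {X : Type*} [Fintype X] [MetricSpace X]
    (ν : X → ℝ) (hν0 : ∀ x, 0 ≤ ν x) (hν1 : ∑ x, ν x = 1)
    (A : Set X) (ε : ℝ) (hε : 0 < ε)
    (m : Set X → ℝ) (hm : ∀ S, m S = ∑ x, if x ∈ S then ν x else 0)
    (Aε : Set X) (hAε : Aε = {x | Metric.infDist x A ≤ ε})
    (ψ : X → ℝ)
    (hψ : ∀ x, ψ x = if x ∈ A then -(m Aᶜ)
      else if x ∈ Aε then -(m Aᶜ) + min (Metric.infDist x A / ε) 1 else m A) :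
    (∑ x, (ψ x) ^ 2 * ν x) - (∑ x, ψ x * ν x) ^ 2 ≥
      m A * m Aεᶜ - 4 * (m (Aε \ A)) ^ 2 := by
  set a := m A with ha
  set b := m Aεᶜ with hb
  set c := m (Aε \ A) with hc
  set μ := ∑ x, ψ x * ν x with hμ
  have hmnonneg : ∀ S : Set X, 0 ≤ m S := by
    intro S
    rw [hm]
    apply Finset.sum_nonneg
    intro x _
    by_cases h : x ∈ S <;> simp [h, hν0 x]
  have ha0 : 0 ≤ a := hmnonneg A
  have hb0 : 0 ≤ b := hmnonneg Aεᶜ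
  have hc0 : 0 ≤ c := hmnonneg (Aε \ A)
  have hAsub : ∀ x, x ∈ A → x ∈ Aε := by
    intro x hx
    rw [hAε]
    simp only [Set.mem_setOf_eq]
    calc Metric.infDist x A = 0 := Metric.infDist_zero_of_mem hx
    _ ≤ ε := hε.le
  have hpart : a + c + b = 1 := by
    rw [← hν1, ha, hc, hb, hm, hm, hm, ← Finset.sum_add_distrib,
      ← Finset.sum_add_distrib]
    apply Finset.sum_congr rfl
    intro x _
    by_cases h1 : x ∈ A
    · have h2 := hAsub x h1
      simp [h1, h2]
    · by_cases h2 : x ∈ Aε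
      · simp [h1, h2]
      · simp [h1, h2]
  have hcompl : m Aᶜ = 1 - a := by
    have : a + m Aᶜ = 1 := by
      rw [← hν1, ha, hm, hm, ← Finset.sum_add_distrib]
      apply Finset.sum_congr rfl
      intro x _
      by_cases h1 : x ∈ A <;> simp [h1]
    linarith
  -- values of ψ
  have hψA : ∀ x, x ∈ A → ψ x = a - 1 := by
    intro x hx
    rw [hψ, if_pos hx, hcompl]; ring
  have hψout : ∀ x, x ∉ Aε → ψ x = a := by
    intro x hx
    rw [hψ, if_neg (fun h => hx (hAsub x h)), if_neg hx]
  have hmin0 : ∀ x, 0 ≤ min (Metric.infDist x A / ε) 1 :=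
    fun x => le_min (div_nonneg Metric.infDist_nonneg hε.le) one_pos.le
  have hmin1 : ∀ x, min (Metric.infDist x A / ε) 1 ≤ 1 := fun x => min_le_right _ _
  have hψ_lb : ∀ x, (a - 1) + (if x ∈ Aεᶜ then (1:ℝ) else 0) ≤ ψ x := by
    intro x
    by_cases h1 : x ∈ A
    · have h2 := hAsub x h1
      rw [hψA x h1, if_neg (fun h => h h2)]
      simp
    · by_cases h2 : x ∈ Aε
      · rw [hψ, if_neg h1, if_pos h2, if_neg (fun h => h h2), hcompl]
        have := hmin0 x
        linarith
      · rw [hψout x h2, if_pos (show x ∈ Aεᶜ from h2)]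
        linarith
  have hψ_ub : ∀ x, ψ x ≤ a - (if x ∈ A then (1:ℝ) else 0) := by
    intro x
    by_cases h1 : x ∈ A
    · rw [hψA x h1, if_pos h1]
    · rw [if_neg h1]
      by_cases h2 : x ∈ Aε
      · rw [hψ, if_neg h1, if_pos h2, hcompl]
        have := hmin1 x
        linarith
      · rw [hψout x h2]
        linarith
  -- indicator-weighted sums
  have hind : ∀ S : Set X, ∑ x, (if x ∈ S then (1:ℝ) else 0) * ν x = m S := by
    intro S
    rw [hm]
    apply Finset.sum_congr rfl
    intro x _
    by_cases h : x ∈ S <;> simp [h]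
  -- bounds on μ
  have hμ_lb : a - 1 + b ≤ μ := by
    have h1 : ∑ x, ((a - 1) + (if x ∈ Aεᶜ then (1:ℝ) else 0)) * ν x ≤ μ := by
      apply Finset.sum_le_sum
      intro x _
      exact mul_le_mul_of_nonneg_right (hψ_lb x) (hν0 x)
    have e1 : ∑ x, ((a - 1) + (if x ∈ Aεᶜ then (1:ℝ) else 0)) * ν x = a - 1 + b := by
      have eb : ∑ x, (if x ∈ Aεᶜ then (1:ℝ) else 0) * ν x = b := by
        rw [hb, hm]
        apply Finset.sum_congr rfl
        intro x _
        by_cases h : x ∈ Aεᶜ <;> simp [h]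
      have expand : ∀ x ∈ Finset.univ, ((a - 1) + (if x ∈ Aεᶜ then (1:ℝ) else 0)) * ν x
          = (a - 1) * ν x + (if x ∈ Aεᶜ then (1:ℝ) else 0) * ν x := fun x _ => by ring
      rw [Finset.sum_congr rfl expand, Finset.sum_add_distrib, ← Finset.mul_sum, hν1, mul_one, eb]
    linarith [h1, e1]
  have hμ_ub : μ ≤ 0 := by
    have h1 : μ ≤ ∑ x, (a - (if x ∈ A then (1:ℝ) else 0)) * ν x := by
      apply Finset.sum_le_sum
      intro x _
      exact mul_le_mul_of_nonneg_right (hψ_ub x) (hν0 x)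
    have e2 : ∑ x, (a - (if x ∈ A then (1:ℝ) else 0)) * ν x = 0 := by
      have ea : ∑ x, (if x ∈ A then (1:ℝ) else 0) * ν x = a := by
        rw [ha, hm]
        apply Finset.sum_congr rfl
        intro x _
        by_cases h : x ∈ A <;> simp [h]
      have expand : ∀ x ∈ Finset.univ, (a - (if x ∈ A then (1:ℝ) else 0)) * ν x
          = a * ν x - (if x ∈ A then (1:ℝ) else 0) * ν x := fun x _ => by ring
      rw [Finset.sum_congr rfl expand, Finset.sum_sub_distrib, ← Finset.mul_sum, hν1, mul_one, ea,
        sub_self]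
    linarith [h1, e2]
  -- variance identity
  have hvar : (∑ x, (ψ x) ^ 2 * ν x) - μ ^ 2 = ∑ x, (ψ x - μ) ^ 2 * ν x := by
    have expand : ∀ x ∈ Finset.univ, (ψ x - μ) ^ 2 * ν x
        = (ψ x) ^ 2 * ν x - 2 * μ * (ψ x * ν x) + μ ^ 2 * ν x := fun x _ => by ring
    rw [Finset.sum_congr rfl expand, Finset.sum_add_distrib, Finset.sum_sub_distrib,
      ← Finset.mul_sum, ← Finset.mul_sum, hν1, ← hμ]
    ring
  -- lower bound the variance sum
  have hlow : (a - 1 - μ) ^ 2 * a + (a - μ) ^ 2 * b ≤ ∑ x, (ψ x - μ) ^ 2 * ν x := by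
    have h1 : ∑ x, ((a - 1 - μ) ^ 2 * (if x ∈ A then ν x else 0)
        + (a - μ) ^ 2 * (if x ∈ Aεᶜ then ν x else 0)) ≤ ∑ x, (ψ x - μ) ^ 2 * ν x := by
      apply Finset.sum_le_sum
      intro x _
      by_cases hx1 : x ∈ A
      · have hx2 : x ∉ Aεᶜ := fun h => h (hAsub x hx1)
        rw [hψA x hx1, if_pos hx1, if_neg hx2]
        apply le_of_eq
        ring
      · by_cases hx2 : x ∈ Aε
        · have hx3 : x ∉ Aεᶜ := fun h => h hx2
          rw [if_neg hx1, if_neg hx3]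
          simp only [mul_zero, add_zero, zero_add]
          exact mul_nonneg (sq_nonneg _) (hν0 x)
        · rw [hψout x hx2, if_neg hx1, if_pos (show x ∈ Aεᶜ from hx2)]
          apply le_of_eq
          ring
    have hsum : ∑ x, ((a - 1 - μ) ^ 2 * (if x ∈ A then ν x else 0)
        + (a - μ) ^ 2 * (if x ∈ Aεᶜ then ν x else 0))
        = (a - 1 - μ) ^ 2 * a + (a - μ) ^ 2 * b := by
      rw [Finset.sum_add_distrib, ← Finset.mul_sum, ← Finset.mul_sum, ha, hb, hm, hm]
      congr!
    linarith [h1, hsum]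
  -- final algebra
  have key : a * b - 4 * c ^ 2 ≤ (a - 1 - μ) ^ 2 * a + (a - μ) ^ 2 * b := by
    have hμc : -c ≤ μ := by linarith
    have hb' : b = 1 - a - c := by linarith
    rw [hb']
    have t1 : 0 ≤ a * c * (μ + c) := by
      apply mul_nonneg (mul_nonneg ha0 hc0); linarith
    have t2 : 0 ≤ a * (1 - a - c) * c := by
      apply mul_nonneg (mul_nonneg ha0 (by linarith)) hc0
    have t3 : 0 ≤ (1 - a) * c ^ 2 := by
      apply mul_nonneg _ (sq_nonneg c); linarith
    have t4 : 0 ≤ μ ^ 2 * (1 - c) := mul_nonneg (sq_nonneg μ) (by linarith)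
    nlinarith [t1, t2, t3, t4, sq_nonneg c]
  linarith [hvar, hlow, key]

/-- Variance lower bound for the interpolation test function `ψ` associated to a set
`A` and its `ε`-dilation `A_ε`:
`Var_ν(ψ) ≥ ν(A) ν(A_ε^c) − 4 ν(A_ε \ A)²`. -/
theorem statement5 {X : Type*} [Fintype X] [MetricSpace X]
    (ν : X → ℝ) (hν0 : ∀ x, 0 ≤ ν x) (hν1 : ∑ x, ν x = 1)
    (A : Set X) (ε : ℝ) (hε : 0 < ε) :
    let m : Set X → ℝ := fun S => ∑ x, if x ∈ S then ν x else 0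
    let Aε : Set X := {x | Metric.infDist x A ≤ ε}
    let ψ : X → ℝ := fun x =>
      if x ∈ A then -(m Aᶜ)
      else if x ∈ Aε then -(m Aᶜ) + min (Metric.infDist x A / ε) 1
      else m A
    (∑ x, (ψ x) ^ 2 * ν x) - (∑ x, ψ x * ν x) ^ 2 ≥
      m A * m Aεᶜ - 4 * (m (Aε \ A)) ^ 2 := by
  intro m Aε ψ
  exact statement5_aux ν hν0 hν1 A ε hε m (fun S => rfl) Aε rfl ψ (fun x => rfl)
end

section
/- Let Q be a nearest-neighbor transition matrix on a finite metric measure graph (G, d, ν), reversible with respect to ν, with spectral gap γ_Q, and let D = max_{x~y} d(x,y). Let A ⊂ V and B = ∂A ∪ ∂(A_ε^c) ∪ (A_ε∖A). If ν(A)ν(A_ε^c) − 4ν(B)² > 0, then γ_Q ≤ (D²/(2ε²)) · ν(B) / (ν(A_ε^c)ν(A) − 4ν(B)²). -/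
/-!
Test the Rayleigh quotient on `f = max 0 (1 - d(·, A) / ε)`, which is `1` on `A`, `0` off
`A_ε` and changes by at most `D / ε` along an edge. Since `A` and `A_εᶜ` are disjoint, the
variance of `f` is at least `ν(A) ν(A_εᶜ)`; and `f` is constant across every edge at a vertex
outside `B`, so the Dirichlet energy is at most `(D / ε)² ν(B) / 2`.
-/

open scoped Classical

open Finset Metric

namespace SimpleGraph

variable {V : Type*} (G : SimpleGraph V)

/-- The paper's `∂S`. -/
def vertexBoundary (S : Set V) : Set V :=
  {x | x ∈ S ∧ ∃ y, G.Adj x y ∧ y ∉ S}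

variable {G}

theorem mem_of_adj_of_notMem_vertexBoundary {S : Set V} {x y : V} (hx : x ∈ S)
    (hxS : x ∉ G.vertexBoundary S) (hxy : G.Adj x y) : y ∈ S :=
  by_contra fun hy => hxS ⟨hx, y, hxy, hy⟩

end SimpleGraph

section Cutoff

variable {V : Type*} [MetricSpace V] {A : Set V} {ε : ℝ}

noncomputable def cutoff (A : Set V) (ε : ℝ) (x : V) : ℝ :=
  max 0 (1 - infDist x A / ε)

theorem cutoff_of_mem {x : V} (hx : x ∈ A) : cutoff A ε x = 1 := by
  simp [cutoff, infDist_zero_of_mem hx]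

theorem cutoff_of_lt_infDist (hε : 0 < ε) {x : V} (hx : ε < infDist x A) :
    cutoff A ε x = 0 :=
  max_eq_left (by rw [sub_nonpos, one_le_div hε]; exact hx.le)

theorem abs_cutoff_sub_cutoff_le (hε : 0 < ε) (x y : V) :
    |cutoff A ε x - cutoff A ε y| ≤ dist x y / ε := by
  have hlip : |infDist x A - infDist y A| ≤ dist x y := by
    simpa [Real.dist_eq] using (lipschitz_infDist_pt A).dist_le_mul x y
  calc |cutoff A ε x - cutoff A ε y|
      ≤ |(1 - infDist x A / ε) - (1 - infDist y A / ε)| := by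
        simpa only [cutoff, max_comm (0 : ℝ)] using abs_max_sub_max_le_abs _ _ 0
    _ = |infDist x A - infDist y A| / ε := by
        rw [sub_sub_sub_cancel_left, ← sub_div, abs_div, abs_of_pos hε, abs_sub_comm]
    _ ≤ dist x y / ε := by gcongr

theorem sq_cutoff_sub_cutoff_le_of_adj (G : SimpleGraph V) {D : ℝ}
    (hD : ∀ x y, G.Adj x y → dist x y ≤ D) (hε : 0 < ε) {x y : V} (hxy : G.Adj x y) :
    (cutoff A ε x - cutoff A ε y) ^ 2 ≤ (D / ε) ^ 2 := by
  rw [← sq_abs]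
  gcongr
  exact (abs_cutoff_sub_cutoff_le hε x y).trans (by gcongr; exact hD x y hxy)

/-- A vertex outside `∂A ∪ ∂(A_εᶜ) ∪ (A_ε \ A)` lies, together with all its neighbours, either in
`A` or in `A_εᶜ`. -/
theorem cutoff_eq_of_adj (G : SimpleGraph V) (hε : 0 < ε) {x y : V} (hxy : G.Adj x y)
    (hx : x ∉ G.vertexBoundary A ∪ G.vertexBoundary {z | infDist z A ≤ ε}ᶜ ∪
      ({z | infDist z A ≤ ε} \ A)) :
    cutoff A ε x = cutoff A ε y := by
  simp only [Set.mem_union, not_or] at hx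
  obtain ⟨⟨hA, hAε⟩, hshell⟩ := hx
  by_cases hxA : x ∈ A
  · have hyA := SimpleGraph.mem_of_adj_of_notMem_vertexBoundary hxA hA hxy
    rw [cutoff_of_mem hxA, cutoff_of_mem hyA]
  · have hxAε : x ∈ {z | infDist z A ≤ ε}ᶜ := fun h => hshell ⟨h, hxA⟩
    have hyAε := SimpleGraph.mem_of_adj_of_notMem_vertexBoundary hxAε hAε hxy
    simp only [Set.mem_compl_iff, Set.mem_ofPred_eq, not_le] at hxAε hyAε
    rw [cutoff_of_lt_infDist hε hxAε, cutoff_of_lt_infDist hε hyAε]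

end Cutoff

section WeightedSums

variable {V : Type*} [Fintype V] {ν : V → ℝ}

theorem sum_mul_le_of_ne_zero_le {p g : V → ℝ} {c : ℝ} (hp0 : ∀ i, 0 ≤ p i)
    (hp1 : ∑ i, p i = 1) (hg : ∀ i, p i ≠ 0 → g i ≤ c) : ∑ i, g i * p i ≤ c :=
  calc ∑ i, g i * p i ≤ ∑ i, c * p i := by
        refine sum_le_sum fun i _ => ?_
        by_cases hi : p i = 0
        · simp [hi]
        · exact mul_le_mul_of_nonneg_right (hg i hi) (hp0 i)
    _ = c := by rw [← mul_sum, hp1, mul_one]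

theorem sum_sq_mul_sub_sq_eq (hν1 : ∑ x, ν x = 1) (f : V → ℝ) :
    ∑ x, f x ^ 2 * ν x - (∑ x, f x * ν x) ^ 2 = ∑ x, (f x - ∑ y, f y * ν y) ^ 2 * ν x := by
  set a := ∑ y, f y * ν y
  have hexpand : ∀ x, (f x - a) ^ 2 * ν x = f x ^ 2 * ν x - 2 * a * (f x * ν x) + a ^ 2 * ν x :=
    fun x => by ring
  simp only [hexpand, sum_add_distrib, sum_sub_distrib, ← mul_sum, hν1]
  ring

/-- The minimum over `a` is `s t / (s + t)`. -/
theorem mul_le_one_sub_sq_mul_add_sq_mul {s t : ℝ} (hs : 0 ≤ s) (ht : 0 ≤ t) (hst : s + t ≤ 1)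
    (a : ℝ) : s * t ≤ (1 - a) ^ 2 * s + a ^ 2 * t := by
  nlinarith [sq_nonneg ((1 - a) * s - a * t), mul_nonneg (mul_nonneg hs ht) (sub_nonneg.2 hst),
    mul_nonneg hs (sq_nonneg (1 - a)), mul_nonneg ht (sq_nonneg a)]

theorem mass_mul_mass_le_variance (hν0 : ∀ x, 0 ≤ ν x) (hν1 : ∑ x, ν x = 1) {S T : Set V}
    (hST : Disjoint S T) {f : V → ℝ} (hfS : ∀ x ∈ S, f x = 1) (hfT : ∀ x ∈ T, f x = 0) :
    (∑ x, S.indicator ν x) * (∑ x, T.indicator ν x) ≤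
      ∑ x, f x ^ 2 * ν x - (∑ x, f x * ν x) ^ 2 := by
  set a := ∑ y, f y * ν y
  have hmass_nonneg (U : Set V) : 0 ≤ ∑ x, U.indicator ν x :=
    sum_nonneg fun x _ => Set.indicator_nonneg (fun x _ => hν0 x) x
  have hmass_add : ∑ x, S.indicator ν x + ∑ x, T.indicator ν x ≤ 1 := by
    rw [← sum_add_distrib, ← hν1]
    refine sum_le_sum fun x _ => ?_
    rw [← Set.indicator_union_of_notMem_inter (fun h => hST.le_bot h)]
    exact Set.indicator_le_self' (fun x _ => hν0 x) x
  have hpointwise (x : V) :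
      (1 - a) ^ 2 * S.indicator ν x + a ^ 2 * T.indicator ν x ≤ (f x - a) ^ 2 * ν x := by
    by_cases hxS : x ∈ S
    · simp [hxS, hST.notMem_of_mem_left hxS, hfS x hxS]
    by_cases hxT : x ∈ T
    · simp [hxS, hxT, hfT x hxT]
    · simpa [hxS, hxT] using mul_nonneg (sq_nonneg (f x - a)) (hν0 x)
  calc (∑ x, S.indicator ν x) * (∑ x, T.indicator ν x)
      ≤ (1 - a) ^ 2 * ∑ x, S.indicator ν x + a ^ 2 * ∑ x, T.indicator ν x :=
        mul_le_one_sub_sq_mul_add_sq_mul (hmass_nonneg S) (hmass_nonneg T) hmass_add a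
    _ ≤ ∑ x, (f x - a) ^ 2 * ν x := by
        rw [mul_sum, mul_sum, ← sum_add_distrib]
        exact sum_le_sum fun x _ => hpointwise x
    _ = ∑ x, f x ^ 2 * ν x - a ^ 2 := (sum_sq_mul_sub_sq_eq hν1 f).symm

theorem dirichlet_sum_le_mul_mass {Q : V → V → ℝ} (hν0 : ∀ x, 0 ≤ ν x)
    (hQ0 : ∀ x y, 0 ≤ Q x y) (hQ1 : ∀ x, ∑ y, Q x y = 1) {f : V → ℝ} {B : Set V} {c : ℝ}
    (hbound : ∀ x y, Q x y ≠ 0 → (f x - f y) ^ 2 ≤ c)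
    (hflat : ∀ x y, Q x y ≠ 0 → x ∉ B → f x = f y) :
    ∑ x, ∑ y, (f x - f y) ^ 2 * Q x y * ν x ≤ c * ∑ x, B.indicator ν x := by
  rw [mul_sum]
  refine sum_le_sum fun x _ => ?_
  have hrow : ∑ y, (f x - f y) ^ 2 * Q x y ≤ B.indicator (fun _ => c) x := by
    refine sum_mul_le_of_ne_zero_le (hQ0 x) (hQ1 x) fun y hy => ?_
    by_cases hx : x ∈ B
    · simpa [hx] using hbound x y hy
    · simp [hx, hflat x y hy hx]
  calc ∑ y, (f x - f y) ^ 2 * Q x y * ν x = (∑ y, (f x - f y) ^ 2 * Q x y) * ν x := by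
        rw [sum_mul]
    _ ≤ B.indicator (fun _ => c) x * ν x := mul_le_mul_of_nonneg_right hrow (hν0 x)
    _ = c * B.indicator ν x := by by_cases hx : x ∈ B <;> simp [hx]

end WeightedSums

theorem statement6_general {V : Type*} [Fintype V] [MetricSpace V] (G : SimpleGraph V)
    (ν : V → ℝ) (Q : V → V → ℝ) (γ D ε : ℝ)
    (hν0 : ∀ x, 0 ≤ ν x) (hν1 : ∑ x, ν x = 1)
    (hQ0 : ∀ x y, 0 ≤ Q x y) (hQ1 : ∀ x, ∑ y, Q x y = 1)
    (hnn : ∀ x y, Q x y ≠ 0 → G.Adj x y ∨ x = y)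
    (hD : ∀ x y, G.Adj x y → dist x y ≤ D)
    (hγ : ∀ f : V → ℝ,
      (∑ x, (f x) ^ 2 * ν x) - (∑ x, f x * ν x) ^ 2 ≠ 0 →
      γ ≤ ((1 / 2) * ∑ x, ∑ y, (f x - f y) ^ 2 * Q x y * ν x) /
          ((∑ x, (f x) ^ 2 * ν x) - (∑ x, f x * ν x) ^ 2))
    (hε : 0 < ε) (A : Set V) :
    let m : Set V → ℝ := fun S => ∑ x, if x ∈ S then ν x else 0
    let Aε : Set V := {x | Metric.infDist x A ≤ ε}
    let B : Set V :=
      {x | x ∈ A ∧ ∃ y, G.Adj x y ∧ y ∉ A} ∪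
      {x | x ∈ Aεᶜ ∧ ∃ y, G.Adj x y ∧ y ∉ Aεᶜ} ∪ (Aε \ A)
    0 < m A * m Aεᶜ - 4 * (m B) ^ 2 →
      γ ≤ D ^ 2 / (2 * ε ^ 2) * (m B / (m Aεᶜ * m A - 4 * (m B) ^ 2)) := by
  intro m Aε B hpos
  set f := cutoff A ε
  have hAAε : A ⊆ Aε := fun x hx => by
    simp [Aε, infDist_zero_of_mem hx, hε.le]
  have hvar : m Aεᶜ * m A - 4 * m B ^ 2 ≤ ∑ x, f x ^ 2 * ν x - (∑ x, f x * ν x) ^ 2 := by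
    have : m A * m Aεᶜ ≤ ∑ x, f x ^ 2 * ν x - (∑ x, f x * ν x) ^ 2 :=
      mass_mul_mass_le_variance hν0 hν1
        (Set.disjoint_compl_right_iff_subset.2 hAAε)
        (fun x hx => cutoff_of_mem hx) (fun x hx => cutoff_of_lt_infDist hε (not_le.1 hx))
    linarith [mul_comm (m A) (m Aεᶜ), sq_nonneg (m B)]
  have henergy : ∑ x, ∑ y, (f x - f y) ^ 2 * Q x y * ν x ≤ (D / ε) ^ 2 * m B := by
    refine dirichlet_sum_le_mul_mass hν0 hQ0 hQ1 (fun x y hxy => ?_) fun x y hxy hxB => ?_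
    · rcases hnn x y hxy with hadj | rfl
      · exact sq_cutoff_sub_cutoff_le_of_adj G hD hε hadj
      · rw [sub_self, sq, zero_mul]
        positivity
    · rcases hnn x y hxy with hadj | rfl
      · exact cutoff_eq_of_adj G hε hadj hxB
      · rfl
  have hmB : 0 ≤ m B := sum_nonneg fun x _ => Set.indicator_nonneg (fun x _ => hν0 x) x
  calc γ ≤ ((1 / 2) * ∑ x, ∑ y, (f x - f y) ^ 2 * Q x y * ν x) /
        (∑ x, f x ^ 2 * ν x - (∑ x, f x * ν x) ^ 2) := hγ f (by linarith)
    _ ≤ D ^ 2 / (2 * ε ^ 2) * m B / (m Aεᶜ * m A - 4 * m B ^ 2) := by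
        refine div_le_div₀ (by positivity) ?_ (by linarith) hvar
        calc (1 / 2) * ∑ x, ∑ y, (f x - f y) ^ 2 * Q x y * ν x
            ≤ (1 / 2) * ((D / ε) ^ 2 * m B) := by gcongr
          _ = D ^ 2 / (2 * ε ^ 2) * m B := by ring
    _ = D ^ 2 / (2 * ε ^ 2) * (m B / (m Aεᶜ * m A - 4 * m B ^ 2)) := mul_div_assoc _ _ _

/-- Discrete conductance-type bound (Lemma `discrete-conductance-bound`): for a
nearest-neighbor transition matrix `Q` on a finite metric measure graph, reversible
w.r.t. `ν`, with spectral gap `γ` and maximal nearest-neighbor edge distance `D`,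
if `B = ∂A ∪ ∂(A_ε^c) ∪ (A_ε \ A)` and `ν(A) ν(A_ε^c) − 4 ν(B)² > 0`, then
`γ ≤ (D² / (2ε²)) ν(B) / (ν(A_ε^c) ν(A) − 4 ν(B)²)`. -/
theorem statement6 {V : Type*} [Fintype V] [MetricSpace V] (G : SimpleGraph V)
    (ν : V → ℝ) (Q : V → V → ℝ) (γ D ε : ℝ)
    (hν0 : ∀ x, 0 ≤ ν x) (hν1 : ∑ x, ν x = 1)
    (hQ0 : ∀ x y, 0 ≤ Q x y) (hQ1 : ∀ x, ∑ y, Q x y = 1)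
    (hrev : ∀ x y, ν x * Q x y = ν y * Q y x)
    (hnn : ∀ x y, Q x y ≠ 0 → G.Adj x y ∨ x = y)
    (hD : ∀ x y, G.Adj x y → dist x y ≤ D)
    (hγ : ∀ f : V → ℝ,
      (∑ x, (f x) ^ 2 * ν x) - (∑ x, f x * ν x) ^ 2 ≠ 0 →
      γ ≤ ((1 / 2) * ∑ x, ∑ y, (f x - f y) ^ 2 * Q x y * ν x) /
          ((∑ x, (f x) ^ 2 * ν x) - (∑ x, f x * ν x) ^ 2))
    (hε : 0 < ε) (A : Set V) :
    let m : Set V → ℝ := fun S => ∑ x, if x ∈ S then ν x else 0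
    let Aε : Set V := {x | Metric.infDist x A ≤ ε}
    let B : Set V :=
      {x | x ∈ A ∧ ∃ y, G.Adj x y ∧ y ∉ A} ∪
      {x | x ∈ Aεᶜ ∧ ∃ y, G.Adj x y ∧ y ∉ Aεᶜ} ∪ (Aε \ A)
    0 < m A * m Aεᶜ - 4 * (m B) ^ 2 →
      γ ≤ D ^ 2 / (2 * ε ^ 2) * (m B / (m Aεᶜ * m A - 4 * (m B) ^ 2)) :=
  statement6_general G ν Q γ D ε hν0 hν1 hQ0 hQ1 hnn hD hγ hε A
end

section
/- Let μ be a finite reversible measure for a transition matrix P on a finite metric measure space, and let ν(x) = e^{−U(x)}μ(x)/Z for a function U, with Q a transition matrix satisfying detailed balance with respect to ν and A·P(x,y) ≤ Q(x,y) for all x, y and some A > 0. If P has spectral gap γ_P, then the spectral gap of Q satisfies γ_Q ≥ A·e^{−2(max U − min U)}·γ_P. -/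
/-- Dirichlet form of a transition matrix `Q` w.r.t. a measure `ν`. -/
noncomputable def dirichletForm {V : Type*} [Fintype V] (Q : V → V → ℝ)
    (ν : V → ℝ) (f : V → ℝ) : ℝ :=
  (1 / 2) * ∑ x, ∑ y, (f x - f y) ^ 2 * Q x y * ν x

/-- Variance of `f` w.r.t. `ν`. -/
noncomputable def varForm {V : Type*} [Fintype V] (ν : V → ℝ) (f : V → ℝ) : ℝ :=
  (∑ x, (f x) ^ 2 * ν x) - (∑ x, f x * ν x) ^ 2

/-- Spectral gap, as the infimum of Rayleigh quotients. -/
noncomputable def specGap {V : Type*} [Fintype V] (Q : V → V → ℝ)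
    (ν : V → ℝ) : ℝ :=
  sInf {r | ∃ f : V → ℝ, varForm ν f ≠ 0 ∧ r = dirichletForm Q ν f / varForm ν f}

section helpers
variable {V : Type*} [Fintype V]

lemma sum_sq_sub (w f : V → ℝ) (h1 : ∑ x, w x = 1) (c : ℝ) :
    ∑ x, (f x - c) ^ 2 * w x = varForm w f + (c - ∑ y, f y * w y) ^ 2 := by
  have e1 : ∑ x, (f x - c) ^ 2 * w x
      = (∑ x, (f x) ^ 2 * w x) - 2 * c * (∑ x, f x * w x) + c ^ 2 * ∑ x, w x := by
    rw [Finset.mul_sum, Finset.mul_sum, ← Finset.sum_sub_distrib, ← Finset.sum_add_distrib]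
    exact Finset.sum_congr rfl fun x _ => by ring
  rw [e1, h1, varForm]; ring

lemma var_nonneg (w f : V → ℝ) (h0 : ∀ x, 0 ≤ w x) (h1 : ∑ x, w x = 1) :
    0 ≤ varForm w f := by
  have h := sum_sq_sub w f h1 (∑ y, f y * w y)
  simp only [sub_self] at h
  have : (0:ℝ) ≤ ∑ x, (f x - ∑ y, f y * w y) ^ 2 * w x :=
    Finset.sum_nonneg fun x _ => mul_nonneg (sq_nonneg _) (h0 x)
  simpa [h] using this

lemma var_le (w f : V → ℝ) (h1 : ∑ x, w x = 1) (c : ℝ) :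
    varForm w f ≤ ∑ x, (f x - c) ^ 2 * w x := by
  rw [sum_sq_sub w f h1 c]
  nlinarith [sq_nonneg (c - ∑ y, f y * w y)]

lemma var_compare (w1 w2 : V → ℝ) (f : V → ℝ) (c : ℝ)
    (h11 : ∑ x, w1 x = 1) (h21 : ∑ x, w2 x = 1)
    (hpt : ∀ x, w1 x ≤ c * w2 x) : varForm w1 f ≤ c * varForm w2 f := by
  set M := ∑ y, f y * w2 y with hM
  calc varForm w1 f ≤ ∑ x, (f x - M) ^ 2 * w1 x := var_le w1 f h11 M
    _ ≤ ∑ x, (f x - M) ^ 2 * (c * w2 x) :=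
        Finset.sum_le_sum fun x _ => mul_le_mul_of_nonneg_left (hpt x) (sq_nonneg _)
    _ = c * ∑ x, (f x - M) ^ 2 * w2 x := by
        rw [Finset.mul_sum]; exact Finset.sum_congr rfl fun x _ => by ring
    _ = c * varForm w2 f := by
        rw [sum_sq_sub w2 f h21 M, ← hM, sub_self]; ring

lemma dir_nonneg (Q : V → V → ℝ) (ν f : V → ℝ)
    (hQ0 : ∀ x y, 0 ≤ Q x y) (hν0 : ∀ x, 0 ≤ ν x) : 0 ≤ dirichletForm Q ν f := by
  apply mul_nonneg (by norm_num)
  exact Finset.sum_nonneg fun x _ => Finset.sum_nonneg fun y _ =>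
    mul_nonneg (mul_nonneg (sq_nonneg _) (hQ0 x y)) (hν0 x)

lemma dir_compare (P Q : V → V → ℝ) (μ ν f : V → ℝ) (c : ℝ)
    (hc : ∀ x y, c * (P x y * μ x) ≤ Q x y * ν x) :
    c * dirichletForm P μ f ≤ dirichletForm Q ν f := by
  simp only [dirichletForm]
  rw [← mul_assoc, mul_comm c (1/2), mul_assoc, Finset.mul_sum]
  apply mul_le_mul_of_nonneg_left _ (by norm_num : (0:ℝ) ≤ 1/2)
  refine Finset.sum_le_sum fun x _ => ?_
  rw [Finset.mul_sum]
  refine Finset.sum_le_sum fun y _ => ?_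
  have h := mul_le_mul_of_nonneg_left (hc x y) (sq_nonneg (f x - f y))
  calc c * ((f x - f y) ^ 2 * P x y * μ x)
      = (f x - f y) ^ 2 * (c * (P x y * μ x)) := by ring
    _ ≤ (f x - f y) ^ 2 * (Q x y * ν x) := h
    _ = (f x - f y) ^ 2 * Q x y * ν x := by ring

end helpers

/-- Holley–Stroock stability of Poincaré inequalities: if `ν = e^{-U} μ / Z`,
`Q` is reversible w.r.t. `ν`, `P` is reversible w.r.t. `μ`, and
`A P(x,y) ≤ Q(x,y)`, then `γ_Q ≥ A e^{−2(max U − min U)} γ_P`. -/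
theorem statement10 {V : Type*} [Fintype V] [Nonempty V]
    (P Q : V → V → ℝ) (μ ν U : V → ℝ) (A : ℝ)
    (hμ0 : ∀ x, 0 ≤ μ x) (hμpos : 0 < ∑ x, μ x)
    (hνdef : ∀ x, ν x = Real.exp (-U x) * μ x / ∑ y, Real.exp (-U y) * μ y)
    (hP0 : ∀ x y, 0 ≤ P x y) (hP1 : ∀ x, ∑ y, P x y = 1)
    (hQ0 : ∀ x y, 0 ≤ Q x y) (hQ1 : ∀ x, ∑ y, Q x y = 1)
    (hrevP : ∀ x y, μ x * P x y = μ y * P y x)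
    (hrevQ : ∀ x y, ν x * Q x y = ν y * Q y x)
    (hA : 0 < A) (hcoer : ∀ x y, A * P x y ≤ Q x y) :
    A * Real.exp (-2 * ((⨆ x, U x) - ⨅ x, U x)) * specGap P μ ≤ specGap Q ν := by
  classical
  set Z := ∑ y, Real.exp (-U y) * μ y with hZ
  have hex : ∃ x, 0 < μ x := by
    by_contra h; push_neg at h
    have : ∑ x, μ x ≤ 0 := Finset.sum_nonpos fun x _ => h x
    linarith
  obtain ⟨x₀, hx₀⟩ := hex
  have hZpos : 0 < Z := by
    apply Finset.sum_pos' (fun i _ => mul_nonneg (Real.exp_pos _).le (hμ0 i))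
    exact ⟨x₀, Finset.mem_univ x₀, mul_pos (Real.exp_pos _) hx₀⟩
  have hν0 : ∀ x, 0 ≤ ν x := fun x => by
    rw [hνdef x]
    exact div_nonneg (mul_nonneg (Real.exp_pos _).le (hμ0 x)) hZpos.le
  have hν1 : ∑ x, ν x = 1 := by
    simp only [hνdef]
    rw [← Finset.sum_div, ← hZ, div_self hZpos.ne']
  have hbA : BddAbove (Set.range U) := Set.Finite.bddAbove (Set.finite_range U)
  have hbB : BddBelow (Set.range U) := Set.Finite.bddBelow (Set.finite_range U)
  set Umax := ⨆ x, U x with hUmax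
  set Umin := ⨅ x, U x with hUmin
  have hle : ∀ x, U x ≤ Umax := fun x => le_ciSup hbA x
  have hge : ∀ x, Umin ≤ U x := fun x => ciInf_le hbB x
  have hmm : Umin ≤ Umax := le_trans (hge (Classical.arbitrary V)) (hle _)
  set SP := {r | ∃ f : V → ℝ, varForm μ f ≠ 0 ∧ r = dirichletForm P μ f / varForm μ f} with hSPdef
  set SQ := {r | ∃ f : V → ℝ, varForm ν f ≠ 0 ∧ r = dirichletForm Q ν f / varForm ν f} with hSQdef
  have hSP : specGap P μ = sInf SP := rfl
  have hSQ : specGap Q ν = sInf SQ := rfl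
  have hQel : ∀ r ∈ SQ, 0 ≤ r := by
    rintro r ⟨f, hf, rfl⟩
    have hv : 0 < varForm ν f := (var_nonneg ν f hν0 hν1).lt_of_ne (Ne.symm hf)
    exact div_nonneg (dir_nonneg Q ν f hQ0 hν0) hv.le
  have hγQ : 0 ≤ specGap Q ν := by
    rcases Set.eq_empty_or_nonempty SQ with h | h
    · rw [hSQ, h, Real.sInf_empty]
    · exact le_csInf h hQel
  rcases le_or_gt (specGap P μ) 0 with hγP | hγP
  · have h1 : 0 ≤ A * Real.exp (-2 * (Umax - Umin)) := by positivity
    nlinarith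
  -- Now γ_P > 0
  have hμν : ∀ x, μ x = Z * Real.exp (U x) * ν x := by
    intro x
    rw [hνdef x, Real.exp_neg]
    field_simp
  have hμ1 : ∑ x, μ x = 1 := by
    by_contra hne
    have hvar : varForm μ (fun _ => 1) = (∑ x, μ x) * (1 - ∑ x, μ x) := by
      simp [varForm]; ring
    have hmem : (0:ℝ) ∈ SP := by
      refine ⟨fun _ => 1, ?_, ?_⟩
      · rw [hvar]
        exact mul_ne_zero hμpos.ne' (sub_ne_zero.mpr (Ne.symm hne))
      · simp [dirichletForm]
    have hPle0 : specGap P μ ≤ 0 := by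
      by_cases hb : BddBelow SP
      · rw [hSP]; exact csInf_le hb hmem
      · rw [hSP, Real.sInf_of_not_bddBelow hb]
    linarith
  have hPel : ∀ r ∈ SP, 0 ≤ r := by
    rintro r ⟨f, hf, rfl⟩
    have hv : 0 < varForm μ f := (var_nonneg μ f hμ0 hμ1).lt_of_ne (Ne.symm hf)
    exact div_nonneg (dir_nonneg P μ f hP0 hμ0) hv.le
  have hSQne : SQ.Nonempty := by
    by_contra hne
    rw [Set.not_nonempty_iff_eq_empty] at hne
    have hallν : ∀ f : V → ℝ, varForm ν f = 0 := by
      intro f; by_contra hf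
      have : dirichletForm Q ν f / varForm ν f ∈ SQ := ⟨f, hf, rfl⟩
      rw [hne] at this; exact this
    have hallμ : ∀ f : V → ℝ, varForm μ f = 0 := by
      intro f
      have h1 : varForm μ f ≤ (Z * Real.exp Umax) * varForm ν f := by
        apply var_compare μ ν f _ hμ1 hν1
        intro x
        calc μ x = Z * Real.exp (U x) * ν x := hμν x
          _ ≤ Z * Real.exp Umax * ν x :=
            mul_le_mul_of_nonneg_right
              (mul_le_mul_of_nonneg_left (Real.exp_le_exp.mpr (hle x)) hZpos.le) (hν0 x)
      rw [hallν f, mul_zero] at h1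
      exact le_antisymm h1 (var_nonneg μ f hμ0 hμ1)
    have hSPemp : SP = ∅ := by
      apply Set.eq_empty_iff_forall_notMem.mpr
      rintro r ⟨f, hf, _⟩
      exact hf (hallμ f)
    have : specGap P μ = 0 := by rw [hSP, hSPemp, Real.sInf_empty]
    linarith
  rw [hSQ]
  apply le_csInf hSQne
  rintro r ⟨f, hf, rfl⟩
  have hvν : 0 < varForm ν f := (var_nonneg ν f hν0 hν1).lt_of_ne (Ne.symm hf)
  have hvμ0 : 0 ≤ varForm μ f := var_nonneg μ f hμ0 hμ1
  have hcompV : varForm ν f ≤ (Real.exp (-Umin) / Z) * varForm μ f := by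
    apply var_compare ν μ f _ hν1 hμ1
    intro x
    rw [hνdef x]
    have h1 : Real.exp (-U x) ≤ Real.exp (-Umin) := Real.exp_le_exp.mpr (neg_le_neg (hge x))
    calc Real.exp (-U x) * μ x / Z ≤ Real.exp (-Umin) * μ x / Z := by
          apply div_le_div_of_nonneg_right ?_ hZpos.le
          exact mul_le_mul_of_nonneg_right h1 (hμ0 x)
      _ = Real.exp (-Umin) / Z * μ x := by ring
  have hcompE : (A * Real.exp (-Umax) / Z) * dirichletForm P μ f ≤ dirichletForm Q ν f := by
    apply dir_compare P Q μ ν f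
    intro x y
    rw [hνdef x]
    have key : A * Real.exp (-Umax) * (P x y * μ x) ≤ Q x y * (Real.exp (-U x) * μ x) := by
      have h1 : A * P x y ≤ Q x y := hcoer x y
      have h2 : Real.exp (-Umax) * μ x ≤ Real.exp (-U x) * μ x :=
        mul_le_mul_of_nonneg_right (Real.exp_le_exp.mpr (neg_le_neg (hle x))) (hμ0 x)
      calc A * Real.exp (-Umax) * (P x y * μ x)
          = (A * P x y) * (Real.exp (-Umax) * μ x) := by ring
        _ ≤ Q x y * (Real.exp (-U x) * μ x) :=
            mul_le_mul h1 h2 (mul_nonneg (Real.exp_pos _).le (hμ0 x)) (hQ0 x y)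
    calc A * Real.exp (-Umax) / Z * (P x y * μ x)
        = (A * Real.exp (-Umax) * (P x y * μ x)) / Z := by ring
      _ ≤ (Q x y * (Real.exp (-U x) * μ x)) / Z := div_le_div_of_nonneg_right key hZpos.le
      _ = Q x y * (Real.exp (-U x) * μ x / Z) := by ring
  have hE_P : specGap P μ * varForm μ f ≤ dirichletForm P μ f := by
    rcases eq_or_lt_of_le hvμ0 with h0 | hpos
    · rw [← h0, mul_zero]; exact dir_nonneg P μ f hP0 hμ0
    · have hmem : dirichletForm P μ f / varForm μ f ∈ SP := ⟨f, hpos.ne', rfl⟩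
      have hbdd : BddBelow SP := ⟨0, fun r hr => hPel r hr⟩
      have h2 : specGap P μ ≤ dirichletForm P μ f / varForm μ f := by
        rw [hSP]; exact csInf_le hbdd hmem
      calc specGap P μ * varForm μ f
          ≤ (dirichletForm P μ f / varForm μ f) * varForm μ f :=
            mul_le_mul_of_nonneg_right h2 hvμ0
        _ = dirichletForm P μ f := div_mul_cancel₀ _ hpos.ne'
  rw [le_div_iff₀ hvν]
  have hexp : Real.exp (-2 * (Umax - Umin)) * Real.exp (-Umin) ≤ Real.exp (-Umax) := by
    rw [← Real.exp_add]
    exact Real.exp_le_exp.mpr (by linarith)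
  have hgv : 0 ≤ specGap P μ * varForm μ f := mul_nonneg hγP.le hvμ0
  have hcoef : 0 ≤ A * Real.exp (-2 * (Umax - Umin)) * specGap P μ :=
    mul_nonneg (mul_nonneg hA.le (Real.exp_pos _).le) hγP.le
  calc A * Real.exp (-2 * (Umax - Umin)) * specGap P μ * varForm ν f
      ≤ A * Real.exp (-2 * (Umax - Umin)) * specGap P μ * ((Real.exp (-Umin) / Z) * varForm μ f) :=
        mul_le_mul_of_nonneg_left hcompV hcoef
    _ = (A * (Real.exp (-2 * (Umax - Umin)) * Real.exp (-Umin)) / Z) * (specGap P μ * varForm μ f) := by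
        ring
    _ ≤ (A * Real.exp (-Umax) / Z) * (specGap P μ * varForm μ f) := by
        apply mul_le_mul_of_nonneg_right _ hgv
        apply div_le_div_of_nonneg_right _ hZpos.le
        exact mul_le_mul_of_nonneg_left hexp hA.le
    _ ≤ (A * Real.exp (-Umax) / Z) * dirichletForm P μ f :=
        mul_le_mul_of_nonneg_left hE_P (by positivity)
    _ ≤ dirichletForm Q ν f := hcompE
end
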